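/- Let e = e_0 + e_1 on the vector space V with basis {v_{i,j,k}} be the explicit representative described in the context. For each k ∈ {1,...,n} let σ^{(k)} ∈ Std(μ_k) and define F^{(k)}_d := span{ v_{k,l,m} : the entry of σ^{(k)} in box (l,m) is ≤ d } for 0 ≤ d ≤ λ_k; each F^{(k)}_• is a full flag of V_k. Then: (i) e_0(F^{(k)}_d) ⊆ F^{(k)}_{d-1} for all d ≥ 1 and Φ(F^{(k)}_•) = σ^{(k)} with respect to the nilpotent endomorphism e_0|_{V_k} (which has Jordan type μ_k); and (ii) the stacked flag F̄_• = LS(F^{(1)}_•,...,F^{(n)}_•) lies in the Springer fibre of e and Φ(F̄_•) = stk(σ^{(1)},...,σ^{(n)}) with respect to e (which has Jordan type μ^Σ). -/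

import Mathlib

/-- A list of naturals is a partition: non-increasing with positive parts. -/
def IsPartitionL (μ : List ℕ) : Prop :=
  μ.Pairwise (· ≥ ·) ∧ ∀ x ∈ μ, 0 < x

/-- A standard tableau of shape `μ` (a partition of `μ.sum`), given as a function on
0-indexed boxes `(r, c)` with `r < μ.length` and `c < μ.getD r 0`: the entries are exactly
`{1, ..., μ.sum}` each occurring once, strictly increasing along rows and down columns. -/
structure IsStdTableau (μ : List ℕ) (T : ℕ → ℕ → ℕ) : Prop where
  entry_mem : ∀ r c, r < μ.length → c < μ.getD r 0 → 1 ≤ T r c ∧ T r c ≤ μ.sum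
  exists_box : ∀ a, 1 ≤ a → a ≤ μ.sum → ∃ r c, r < μ.length ∧ c < μ.getD r 0 ∧ T r c = a
  inj : ∀ r c r' c', r < μ.length → c < μ.getD r 0 → r' < μ.length → c' < μ.getD r' 0 →
      T r c = T r' c' → r = r' ∧ c = c'
  row_lt : ∀ r c c', r < μ.length → c < c' → c' < μ.getD r 0 → T r c < T r c'
  col_lt : ∀ r r' c, r < r' → r' < μ.length → c < μ.getD r' 0 → T r c < T r' c

/-- `shift μ k = λ_0 + ... + λ_{k-1}` where `λ_l = (μ l).sum`. -/
def shift (μ : ℕ → List ℕ) (k : ℕ) : ℕ := ∑ l ∈ Finset.range k, (μ l).sum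

/-- The maximal number of parts among `μ 0, ..., μ (n-1)`. -/
def maxLen (n : ℕ) (μ : ℕ → List ℕ) : ℕ := (Finset.range n).sup fun k => (μ k).length

/-- The pointwise sum partition `μ^Σ`, with `j`-th part `Σ_{i<n} μ_{i,j}`. -/
def sumShape (n : ℕ) (μ : ℕ → List ℕ) : List ℕ :=
  List.ofFn fun r : Fin (maxLen n μ) => ∑ k ∈ Finset.range n, (μ k).getD (r : ℕ) 0

/-- Row `r` of the stacked filling: the concatenation over `k = 0, ..., n-1` of row `r`
of `T k`, with every entry of the `k`-th row increased by `λ_0 + ... + λ_{k-1}`. -/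
def stkRow (n : ℕ) (μ : ℕ → List ℕ) (T : ℕ → ℕ → ℕ → ℕ) (r : ℕ) : List ℕ :=
  ((List.range n).map fun k =>
    (List.range ((μ k).getD r 0)).map fun c => T k r c + shift μ k).flatten

/-- The entry of the stacked filling `stk (T 0, ..., T (n-1))` in box `(r, c)`. -/
def stkEntry (n : ℕ) (μ : ℕ → List ℕ) (T : ℕ → ℕ → ℕ → ℕ) (r c : ℕ) : ℕ :=
  (stkRow n μ T r).getD c 0

/-- The number of entries `a ∈ {1,...,i}` of the tableau `T` of shape `μ` lying in the
first `p` columns (0-indexed columns `c < p`). -/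
noncomputable def entriesInCols (μ : List ℕ) (T : ℕ → ℕ → ℕ) (i p : ℕ) : ℕ :=
  Set.ncard {a : ℕ | 1 ≤ a ∧ a ≤ i ∧
    ∃ r c, r < μ.length ∧ c < μ.getD r 0 ∧ c < p ∧ T r c = a}

/-- The index set `𝕀`: 0-indexed triples `(i, j, k)` with `i < n`, `j` a row index of the
partition `μ i`, and `k < μ_{i,j}`. -/
def InIdx (n : ℕ) (μ : ℕ → List ℕ) (x : ℕ × ℕ × ℕ) : Prop :=
  x.1 < n ∧ x.2.1 < (μ x.1).length ∧ x.2.2 < (μ x.1).getD x.2.1 0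

/-- The explicit representative: `v` restricted to `𝕀` is a basis of `V`, `e0` shifts each
basis vector one step down its own Jordan chain (within its Young diagram), and `e1` sends
the first vector `v (i,j,0)` of a chain to the last vector `v (i', j, μ_{i',j} - 1)` of the
chain in the same row `j` of the previous diagram `i' < i` having a nonzero `j`-th part
(and to `0` if no such `i'` exists); `e1` kills all other basis vectors. -/
structure IsRep {𝕜 V : Type*} [Field 𝕜] [AddCommGroup V] [Module 𝕜 V]
    (n : ℕ) (μ : ℕ → List ℕ) (v : ℕ × ℕ × ℕ → V) (e0 e1 : V →ₗ[𝕜] V) : Prop where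
  indep : LinearIndependent 𝕜 (fun x : {x : ℕ × ℕ × ℕ // InIdx n μ x} => v x)
  spans : Submodule.span 𝕜 (v '' {x | InIdx n μ x}) = ⊤
  e0_bot : ∀ i j, InIdx n μ (i, j, 0) → e0 (v (i, j, 0)) = 0
  e0_succ : ∀ i j k, InIdx n μ (i, j, k + 1) → e0 (v (i, j, k + 1)) = v (i, j, k)
  e1_pos : ∀ i j k, InIdx n μ (i, j, k + 1) → e1 (v (i, j, k + 1)) = 0
  e1_link : ∀ i i' j, InIdx n μ (i, j, 0) → i' < i → 0 < (μ i').getD j 0 →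
      (∀ i'', i' < i'' → i'' < i → (μ i'').getD j 0 = 0) →
      e1 (v (i, j, 0)) = v (i', j, (μ i').getD j 0 - 1)
  e1_none : ∀ i j, InIdx n μ (i, j, 0) → (∀ i' < i, (μ i').getD j 0 = 0) →
      e1 (v (i, j, 0)) = 0

section LinearDefs

variable {𝕜 V : Type*} [Field 𝕜] [AddCommGroup V] [Module 𝕜 V]

/-- A full flag `0 = F 0 ⊂ F 1 ⊂ ... ⊂ F N = V` of an `N`-dimensional space. -/
structure IsFullFlag (N : ℕ) (F : ℕ → Submodule 𝕜 V) : Prop where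
  mono : Monotone F
  bot : F 0 = ⊥
  top : F N = ⊤
  dim : ∀ i ≤ N, Module.finrank 𝕜 ↥(F i) = i

/-- A full flag `0 = F 0 ⊂ F 1 ⊂ ... ⊂ F l = U` of an `l`-dimensional subspace `U ⊆ V`. -/
structure IsFlagOf (U : Submodule 𝕜 V) (l : ℕ) (F : ℕ → Submodule 𝕜 V) : Prop where
  mono : Monotone F
  le : ∀ d, F d ≤ U
  bot : F 0 = ⊥
  top : F l = U
  dim : ∀ d ≤ l, Module.finrank 𝕜 ↥(F d) = d

/-- `V = V_0 ⊕ ... ⊕ V_{n-1}` is an internal direct sum decomposition with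
`dim V_k = lam k`. -/
structure IsDecomp (n : ℕ) (lam : ℕ → ℕ) (Vsub : ℕ → Submodule 𝕜 V) : Prop where
  dim : ∀ k < n, Module.finrank 𝕜 ↥(Vsub k) = lam k
  indep : ∀ k < n, Disjoint (Vsub k) (∑ l ∈ (Finset.range n).erase k, Vsub l)
  total : ∑ k ∈ Finset.range n, Vsub k = ⊤

/-- Partial sums `lam 0 + ... + lam (k-1)`. -/
def pSum (lam : ℕ → ℕ) (k : ℕ) : ℕ := ∑ l ∈ Finset.range k, lam l

/-- For `1 ≤ i`, the (0-indexed) index `j` of the block containing position `i`, i.e. the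
largest `j ≤ n` with `lam 0 + ... + lam (j-1) < i`. -/
def LSidx (n : ℕ) (lam : ℕ → ℕ) (i : ℕ) : ℕ :=
  Nat.findGreatest (fun j => pSum lam j < i) n

/-- The Lusztig–Spaltenstein flag: `F̄ i = W_{j-1} + F j d` where `j = LSidx n lam i` is the
block containing position `i`, `W_{j-1} = V_0 + ... + V_{j-1}` and `d = i - (lam 0 + ... + lam (j-1))`. -/
def LSflag (n : ℕ) (lam : ℕ → ℕ) (Vsub : ℕ → Submodule 𝕜 V)
    (F : ℕ → ℕ → Submodule 𝕜 V) (i : ℕ) : Submodule 𝕜 V :=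
  (∑ k ∈ Finset.range (LSidx n lam i), Vsub k) +
    F (LSidx n lam i) (i - pSum lam (LSidx n lam i))

end LinearDefs

/-! The representative acts on its basis along Jordan chains: `e v_x` is either `0` or the
next basis vector `v_{f x}` of the chain, and `δ x` counts the steps from `x` to the end of its
chain. On the span of a chain-closed set of basis vectors, `e ^ p` kills exactly the span of
those of depth `< p`, because it sends the others injectively to basis vectors; so every
dimension in the statement counts basis vectors. For `e0` on `V_k` the depth of `v_{k,j,m}` is
its column `m` in the diagram of `μ k`. For `e = e0 + e1` it is the column of the box of `μ^Σ`
that `v_{k,j,m}` occupies after stacking, and the stacked tableau has there the entry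
`σ k j m + λ_0 + ... + λ_{k-1}`. Both flags are spanned by the basis vectors whose entry is at
most the flag index, so the Spaltenstein invariants are read off the tableaux. -/

open Submodule

section BasisSpans

variable {𝕜 V ι : Type*} [Field 𝕜] [AddCommGroup V] [Module 𝕜 V]

theorem LinearIndepOn.finrank_span_image {v : ι → V} {s : Set ι} (hs : LinearIndepOn 𝕜 v s) :
    Module.finrank 𝕜 (span 𝕜 (v '' s)) = s.ncard :=
  (Cardinal.toNat_toENat _).symm.trans (congrArg ENat.toNat (toENat_rank_span_set hs))

theorem sum_span_eq_span_biUnion {κ : Type*} (s : Finset κ) (g : κ → Set V) :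
    ∑ k ∈ s, span 𝕜 (g k) = span 𝕜 (⋃ k ∈ s, g k) := by
  classical
  induction s using Finset.induction with
  | empty => simp
  | insert _ _ h ih =>
    rw [Finset.sum_insert h, Finset.set_biUnion_insert, span_union, ih, Submodule.add_eq_sup]

structure IsJordanChains (e : V →ₗ[𝕜] V) (v : ι → V) (A : Set ι) (δ : ι → ℕ) (f : ι → ι) :
    Prop where
  apply_eq_zero : ∀ x ∈ A, δ x = 0 → e (v x) = 0
  apply_eq : ∀ x ∈ A, 0 < δ x → e (v x) = v (f x)
  mapsTo : ∀ x ∈ A, 0 < δ x → f x ∈ A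
  depth_step : ∀ x ∈ A, 0 < δ x → δ (f x) + 1 = δ x
  injOn : Set.InjOn f {x ∈ A | 0 < δ x}

namespace IsJordanChains

variable {e : V →ₗ[𝕜] V} {v : ι → V} {A : Set ι} {δ : ι → ℕ} {f : ι → ι}

theorem subset (h : IsJordanChains e v A δ f) {B : Set ι} (hB : B ⊆ A)
    (hf : ∀ x ∈ B, 0 < δ x → f x ∈ B) : IsJordanChains e v B δ f where
  apply_eq_zero x hx := h.apply_eq_zero x (hB hx)
  apply_eq x hx := h.apply_eq x (hB hx)
  mapsTo := hf
  depth_step x hx := h.depth_step x (hB hx)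
  injOn := h.injOn.mono fun _ => And.imp_left (@hB _)

theorem sublevel (h : IsJordanChains e v A δ f) {g : ι → ℕ}
    (hg : ∀ x ∈ A, 0 < δ x → g (f x) < g x) (i : ℕ) :
    IsJordanChains e v {x ∈ A | g x ≤ i} δ f :=
  h.subset (Set.sep_subset _ _) fun x hx hpos =>
    ⟨h.mapsTo x hx.1 hpos, (hg x hx.1 hpos).le.trans hx.2⟩

theorem iterate_mem_and_depth (h : IsJordanChains e v A δ f) (p : ℕ) :
    ∀ x ∈ A, p ≤ δ x → f^[p] x ∈ A ∧ δ (f^[p] x) + p = δ x := by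
  induction p with
  | zero => exact fun x hx _ => ⟨hx, rfl⟩
  | succ p ih =>
    intro x hx hp
    have hδ := h.depth_step x hx (by omega)
    obtain ⟨hmem, hdepth⟩ := ih (f x) (h.mapsTo x hx (by omega)) (by omega)
    exact ⟨hmem, by rw [Function.iterate_succ_apply]; omega⟩

theorem pow_apply_of_le (h : IsJordanChains e v A δ f) (p : ℕ) :
    ∀ x ∈ A, p ≤ δ x → (e ^ p) (v x) = v (f^[p] x) := by
  induction p with
  | zero => exact fun _ _ _ => rfl
  | succ p ih =>
    intro x hx hp
    have hδ := h.depth_step x hx (by omega)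
    rw [pow_succ, Module.End.mul_apply, h.apply_eq x hx (by omega),
      ih (f x) (h.mapsTo x hx (by omega)) (by omega), Function.iterate_succ_apply]

theorem pow_apply_of_lt (h : IsJordanChains e v A δ f) (p : ℕ) :
    ∀ x ∈ A, δ x < p → (e ^ p) (v x) = 0 := by
  induction p with
  | zero => exact fun _ _ _ => by omega
  | succ p ih =>
    intro x hx hp
    rw [pow_succ, Module.End.mul_apply]
    rcases Nat.eq_zero_or_pos (δ x) with h0 | hpos
    · rw [h.apply_eq_zero x hx h0, map_zero]
    · have hδ := h.depth_step x hx hpos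
      rw [h.apply_eq x hx hpos]
      exact ih (f x) (h.mapsTo x hx hpos) (by omega)

theorem injOn_iterate (h : IsJordanChains e v A δ f) (p : ℕ) :
    Set.InjOn f^[p] {x ∈ A | p ≤ δ x} := by
  induction p with
  | zero => exact Set.injOn_id _
  | succ p ih =>
    rintro x ⟨hx, hpx⟩ y ⟨hy, hpy⟩ hxy
    have hδx := h.depth_step x hx (by omega)
    have hδy := h.depth_step y hy (by omega)
    exact h.injOn ⟨hx, by omega⟩ ⟨hy, by omega⟩ <|
      ih ⟨h.mapsTo x hx (by omega), by omega⟩ ⟨h.mapsTo y hy (by omega), by omega⟩ hxy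

theorem disjoint_span_ker_pow (h : IsJordanChains e v A δ f) (hv : LinearIndepOn 𝕜 v A)
    (p : ℕ) : Disjoint (span 𝕜 (v '' {x ∈ A | p ≤ δ x})) (LinearMap.ker (e ^ p)) := by
  have hmaps : f^[p] '' {x ∈ A | p ≤ δ x} ⊆ A := by
    rintro _ ⟨x, ⟨hx, hpx⟩, rfl⟩
    exact (h.iterate_mem_and_depth p x hx hpx).1
  have hind : LinearIndepOn 𝕜 (⇑(e ^ p) ∘ v) {x ∈ A | p ≤ δ x} :=
    ((hv.mono hmaps).comp_of_image (h.injOn_iterate p)).congr fun x hx =>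
      (h.pow_apply_of_le p x hx.1 hx.2).symm
  rw [Set.image_eq_range]
  exact range_ker_disjoint hind

theorem span_inf_ker_pow (h : IsJordanChains e v A δ f) (hv : LinearIndepOn 𝕜 v A) (p : ℕ) :
    span 𝕜 (v '' A) ⊓ LinearMap.ker (e ^ p) = span 𝕜 (v '' {x ∈ A | δ x < p}) := by
  have hsplit : A = {x ∈ A | δ x < p} ∪ {x ∈ A | p ≤ δ x} := by
    rw [← Set.sep_or, Set.sep_eq_self_iff_mem_true.2 fun x _ => lt_or_ge _ _]
  have hlow : span 𝕜 (v '' {x ∈ A | δ x < p}) ≤ LinearMap.ker (e ^ p) := by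
    rw [span_le]
    rintro _ ⟨x, ⟨hx, hpx⟩, rfl⟩
    exact h.pow_apply_of_lt p x hx hpx
  conv_lhs => rw [hsplit, Set.image_union, span_union]
  rw [sup_inf_assoc_of_le _ hlow, (h.disjoint_span_ker_pow hv p).eq_bot, sup_bot_eq]

theorem finrank_span_inf_ker_pow (h : IsJordanChains e v A δ f) (hv : LinearIndepOn 𝕜 v A)
    (p : ℕ) :
    Module.finrank 𝕜 (span 𝕜 (v '' A) ⊓ LinearMap.ker (e ^ p) : Submodule 𝕜 V) =
      {x ∈ A | δ x < p}.ncard := by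
  rw [h.span_inf_ker_pow hv, (hv.mono (Set.sep_subset _ _)).finrank_span_image]

theorem map_span_sublevel_succ_le (h : IsJordanChains e v A δ f) {g : ι → ℕ}
    (hg : ∀ x ∈ A, 0 < δ x → g (f x) < g x) (i : ℕ) :
    map e (span 𝕜 (v '' {x ∈ A | g x ≤ i + 1})) ≤ span 𝕜 (v '' {x ∈ A | g x ≤ i}) := by
  rw [map_span, span_le]
  rintro _ ⟨_, ⟨x, ⟨hx, hxi⟩, rfl⟩, rfl⟩
  rcases Nat.eq_zero_or_pos (δ x) with h0 | hpos
  · rw [h.apply_eq_zero x hx h0]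
    exact zero_mem _
  · rw [h.apply_eq x hx hpos]
    exact subset_span ⟨f x, ⟨h.mapsTo x hx hpos, by have := hg x hx hpos; omega⟩, rfl⟩

end IsJordanChains

theorem ncard_sep_le_of_bijOn {ι : Type*} {X : Set ι} {g : ι → ℕ} {N i : ℕ}
    (hg : Set.BijOn g X (Set.Icc 1 N)) (hi : i ≤ N) : {x ∈ X | g x ≤ i}.ncard = i := by
  have himg : g '' {x ∈ X | g x ≤ i} = Set.Icc 1 i := by
    ext a
    constructor
    · rintro ⟨x, ⟨hx, hxi⟩, rfl⟩
      exact ⟨(hg.mapsTo hx).1, hxi⟩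
    · rintro ⟨ha1, hai⟩
      obtain ⟨x, hx, rfl⟩ := hg.surjOn ⟨ha1, hai.trans hi⟩
      exact ⟨x, ⟨hx, hai⟩, rfl⟩
  rw [← (hg.injOn.mono (Set.sep_subset _ _)).ncard_image, himg,
    Set.ncard_Icc_nat]
  omega

theorem isFlagOf_span_sublevel {v : ι → V} {X : Set ι} {g : ι → ℕ} {N : ℕ}
    (hv : LinearIndepOn 𝕜 v X) (hg : Set.BijOn g X (Set.Icc 1 N)) :
    IsFlagOf (span 𝕜 (v '' X)) N fun i => span 𝕜 (v '' {x ∈ X | g x ≤ i}) where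
  mono _ _ hij := span_mono (Set.image_mono fun _ hx => ⟨hx.1, hx.2.trans hij⟩)
  le _ := span_mono (Set.image_mono (Set.sep_subset _ _))
  bot := by
    rw [Set.sep_eq_empty_iff_mem_false.2 fun x hx hx0 => by
      have := (hg.mapsTo hx).1; omega, Set.image_empty, span_empty]
  top := by
    rw [Set.sep_eq_self_iff_mem_true.2 fun x hx => (hg.mapsTo hx).2]
  dim _ hi := by
    rw [(hv.mono (Set.sep_subset _ _)).finrank_span_image, ncard_sep_le_of_bijOn hg hi]

theorem IsFlagOf.isFullFlag {N : ℕ} {F : ℕ → Submodule 𝕜 V} (h : IsFlagOf ⊤ N F) :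
    IsFullFlag N F :=
  ⟨h.mono, h.bot, h.top, h.dim⟩

end BasisSpans

section Boxes

def youngBoxes (μ : List ℕ) : Set (ℕ × ℕ) :=
  {b | b.1 < μ.length ∧ b.2 < μ.getD b.1 0}

theorem ncard_youngBoxes_col_lt (μ : List ℕ) (p : ℕ) :
    {b ∈ youngBoxes μ | b.2 < p}.ncard =
      ∑ j ∈ Finset.range μ.length, min p (μ.getD j 0) := by
  have hset : {b ∈ youngBoxes μ | b.2 < p} = Equiv.sigmaEquivProd ℕ ℕ ''
      ↑((Finset.range μ.length).sigma fun j => Finset.range (min p (μ.getD j 0))) := by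
    ext ⟨j, c⟩
    simp only [youngBoxes, Set.mem_ofPred_eq, Set.mem_image, Finset.coe_sigma, Set.mem_sigma_iff,
      Finset.coe_range, Set.mem_Iio, Sigma.exists, Equiv.sigmaEquivProd_apply, Prod.mk.injEq]
    constructor
    · rintro ⟨⟨hj, hc⟩, hcp⟩
      exact ⟨j, c, ⟨hj, lt_min hcp hc⟩, rfl, rfl⟩
    · rintro ⟨j, c, ⟨hj, hc⟩, rfl, rfl⟩
      exact ⟨⟨hj, (lt_min_iff.1 hc).2⟩, (lt_min_iff.1 hc).1⟩
  rw [hset, Set.ncard_image_of_injective _ (Equiv.injective _), Set.ncard_coe_finset,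
    Finset.card_sigma]
  simp

theorem entriesInCols_eq_ncard {ι : Type*} {X : Set ι} {π : ι → ℕ × ℕ} {g : ι → ℕ}
    {μ : List ℕ} {T : ℕ → ℕ → ℕ} {N : ℕ} (hπ : Set.MapsTo π X (youngBoxes μ))
    (hπ' : Set.SurjOn π X (youngBoxes μ)) (hT : ∀ x ∈ X, T (π x).1 (π x).2 = g x)
    (hg : Set.BijOn g X (Set.Icc 1 N)) (i p : ℕ) :
    entriesInCols μ T i p = {x ∈ {x ∈ X | g x ≤ i} | (π x).2 < p}.ncard := by
  rw [entriesInCols, ← (hg.injOn.mono fun x hx => hx.1.1).ncard_image]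
  congr 1
  ext a
  constructor
  · rintro ⟨-, hai, r, c, hr, hc, hcp, rfl⟩
    obtain ⟨x, hx, hπx⟩ := hπ' (show (r, c) ∈ youngBoxes μ from ⟨hr, hc⟩)
    have hTx := hT x hx
    rw [hπx] at hTx
    exact ⟨x, ⟨⟨hx, hTx ▸ hai⟩, by rw [hπx]; exact hcp⟩, hTx.symm⟩
  · rintro ⟨x, ⟨⟨hx, hxi⟩, hxp⟩, rfl⟩
    obtain ⟨hr, hc⟩ := hπ hx
    exact ⟨(hg.mapsTo hx).1, hxi, _, _, hr, hc, hxp, hT x hx⟩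

theorem exists_eq_sum_range_add (a : ℕ → ℕ) {n c : ℕ}
    (hc : c < ∑ k ∈ Finset.range n, a k) :
    ∃ k < n, ∃ m < a k, c = ∑ l ∈ Finset.range k, a l + m := by
  induction n with
  | zero => simp at hc
  | succ n ih =>
    by_cases h : c < ∑ k ∈ Finset.range n, a k
    · obtain ⟨k, hk, m, hm, rfl⟩ := ih h
      exact ⟨k, by omega, m, hm, rfl⟩
    · rw [Finset.sum_range_succ] at hc
      exact ⟨n, by omega, c - ∑ k ∈ Finset.range n, a k, by omega, by omega⟩

theorem eq_of_sum_range_add_eq (a : ℕ → ℕ) {k k' m m' : ℕ} (hm : m < a k) (hm' : m' < a k')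
    (h : ∑ l ∈ Finset.range k, a l + m = ∑ l ∈ Finset.range k', a l + m') :
    k = k' ∧ m = m' := by
  wlog hle : k ≤ k' generalizing k k' m m'
  · obtain ⟨h1, h2⟩ := this hm' hm h.symm (by omega)
    exact ⟨h1.symm, h2.symm⟩
  obtain hlt | rfl := hle.lt_or_eq
  · have := Finset.sum_le_sum_of_subset (f := a) (Finset.range_subset_range.2 hlt)
    rw [Finset.sum_range_succ] at this
    omega
  · exact ⟨rfl, by omega⟩

end Boxes

section Representative

variable {n : ℕ} {μ : ℕ → List ℕ} {σ : ℕ → ℕ → ℕ → ℕ}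

variable (n μ) in
def blockIdx (k : ℕ) : Set (ℕ × ℕ × ℕ) :=
  {x | x.1 = k ∧ InIdx n μ x}

theorem bijOn_blockIdx {k : ℕ} (hk : k < n) (hσ : IsStdTableau (μ k) (σ k)) :
    Set.BijOn (fun x => σ k x.2.1 x.2.2) (blockIdx n μ k) (Set.Icc 1 (μ k).sum) := by
  refine ⟨?_, ?_, ?_⟩
  · rintro ⟨_, j, m⟩ ⟨rfl, -, hj, hm⟩
    exact hσ.entry_mem j m hj hm
  · rintro ⟨_, j, m⟩ ⟨rfl, -, hj, hm⟩ ⟨_, j', m'⟩ ⟨rfl, -, hj', hm'⟩ h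
    obtain ⟨rfl, rfl⟩ := hσ.inj j m j' m' hj hm hj' hm' h
    rfl
  · rintro a ⟨ha1, ha⟩
    obtain ⟨j, m, hj, hm, rfl⟩ := hσ.exists_box a ha1 ha
    exact ⟨(k, j, m), ⟨rfl, hk, hj, hm⟩, rfl⟩

theorem mapsTo_snd_blockIdx (k : ℕ) :
    Set.MapsTo Prod.snd (blockIdx n μ k) (youngBoxes (μ k)) := by
  rintro ⟨_, j, m⟩ ⟨rfl, -, hj, hm⟩
  exact ⟨hj, hm⟩

theorem blockIdx_sep_col_lt {k : ℕ} (hk : k < n) (p : ℕ) :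
    {x ∈ blockIdx n μ k | x.2.2 < p} = Prod.mk k '' {b ∈ youngBoxes (μ k) | b.2 < p} := by
  ext ⟨i, j, m⟩
  constructor
  · rintro ⟨⟨rfl, -, hj, hm⟩, hmp⟩
    exact ⟨(j, m), ⟨⟨hj, hm⟩, hmp⟩, rfl⟩
  · rintro ⟨_, ⟨⟨hj, hm⟩, hmp⟩, h⟩
    cases h
    exact ⟨⟨rfl, hk, hj, hm⟩, hmp⟩

theorem surjOn_snd_blockIdx {k : ℕ} (hk : k < n) :
    Set.SurjOn Prod.snd (blockIdx n μ k) (youngBoxes (μ k)) := by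
  rintro ⟨j, m⟩ ⟨hj, hm⟩
  exact ⟨(k, j, m), ⟨rfl, hk, hj, hm⟩, rfl⟩

theorem ncard_blockIdx_col_lt {k : ℕ} (hk : k < n) (p : ℕ) :
    {x ∈ blockIdx n μ k | x.2.2 < p}.ncard =
      ∑ j ∈ Finset.range (μ k).length, min p ((μ k).getD j 0) := by
  rw [blockIdx_sep_col_lt hk, Set.ncard_image_of_injective _ (Prod.mk_right_injective k),
    ncard_youngBoxes_col_lt]

theorem IsRep.isJordanChains_e0 {𝕜 V : Type*} [Field 𝕜] [AddCommGroup V] [Module 𝕜 V]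
    {v : ℕ × ℕ × ℕ → V} {e0 e1 : V →ₗ[𝕜] V} (hrep : IsRep n μ v e0 e1) (k : ℕ) :
    IsJordanChains e0 v (blockIdx n μ k) (fun x => x.2.2) fun x => (x.1, x.2.1, x.2.2 - 1) where
  apply_eq_zero := by
    rintro ⟨i, j, m⟩ ⟨-, hx⟩ (rfl : m = 0)
    exact hrep.e0_bot i j hx
  apply_eq := by
    rintro ⟨i, j, _ | m⟩ ⟨-, hx⟩ hpos
    · exact absurd hpos (lt_irrefl 0)
    · exact hrep.e0_succ i j m hx
  mapsTo := by
    rintro ⟨i, j, m⟩ ⟨hk, hi, hj, hm⟩ -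
    exact ⟨hk, hi, hj, by dsimp only at hm ⊢; omega⟩
  depth_step _ _ hpos := by dsimp only at hpos ⊢; omega
  injOn := by
    rintro ⟨i, j, m⟩ ⟨-, hm⟩ ⟨i', j', m'⟩ ⟨-, hm'⟩ h
    simp only [Prod.mk.injEq] at h hm hm' ⊢
    omega

theorem row_lt_of_mem_blockIdx {k : ℕ} (hσ : IsStdTableau (μ k) (σ k)) :
    ∀ x ∈ blockIdx n μ k, 0 < x.2.2 → σ k x.2.1 (x.2.2 - 1) < σ k x.2.1 x.2.2 := by
  rintro ⟨_, j, m⟩ ⟨rfl, -, hj, hm⟩ hpos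
  exact hσ.row_lt j (m - 1) m hj (by dsimp only at hpos; omega) hm

theorem shift_mono (μ : ℕ → List ℕ) : Monotone (shift μ) := fun _ _ h =>
  Finset.sum_le_sum_of_subset (Finset.range_subset_range.2 h)

theorem shift_succ (μ : ℕ → List ℕ) (k : ℕ) : shift μ (k + 1) = shift μ k + (μ k).sum :=
  Finset.sum_range_succ _ _

variable (μ σ) in
def stackedValue (x : ℕ × ℕ × ℕ) : ℕ :=
  σ x.1 x.2.1 x.2.2 + shift μ x.1

variable (μ) in
def stackedColumn (x : ℕ × ℕ × ℕ) : ℕ :=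
  ∑ k ∈ Finset.range x.1, (μ k).getD x.2.1 0 + x.2.2

variable (μ) in
def stackBox (x : ℕ × ℕ × ℕ) : ℕ × ℕ :=
  (x.2.1, stackedColumn μ x)

variable (μ) in
def prevBlock (i j : ℕ) : ℕ :=
  Nat.findGreatest (fun i' => 0 < (μ i').getD j 0) (i - 1)

variable (μ) in
def chainPred : ℕ × ℕ × ℕ → ℕ × ℕ × ℕ
  | (i, j, m + 1) => (i, j, m)
  | (i, j, 0) => (prevBlock μ i j, j, (μ (prevBlock μ i j)).getD j 0 - 1)

theorem stackedValue_bounds (hσ : ∀ k < n, IsStdTableau (μ k) (σ k)) {x : ℕ × ℕ × ℕ}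
    (hx : InIdx n μ x) :
    shift μ x.1 < stackedValue μ σ x ∧ stackedValue μ σ x ≤ shift μ (x.1 + 1) := by
  have := (hσ x.1 hx.1).entry_mem x.2.1 x.2.2 hx.2.1 hx.2.2
  rw [stackedValue, shift_succ]
  omega

theorem bijOn_stackedValue (hσ : ∀ k < n, IsStdTableau (μ k) (σ k)) :
    Set.BijOn (stackedValue μ σ) {x | InIdx n μ x} (Set.Icc 1 (shift μ n)) := by
  have hblock : ∀ x y, InIdx n μ x → InIdx n μ y → x.1 < y.1 →
      stackedValue μ σ x < stackedValue μ σ y := fun x y hx hy hxy =>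
    calc stackedValue μ σ x ≤ shift μ (x.1 + 1) := (stackedValue_bounds hσ hx).2
      _ ≤ shift μ y.1 := shift_mono μ hxy
      _ < stackedValue μ σ y := (stackedValue_bounds hσ hy).1
  refine ⟨fun x hx => ?_, ?_, ?_⟩
  · have := stackedValue_bounds hσ hx
    have := shift_mono μ (show x.1 + 1 ≤ n from hx.1)
    exact ⟨by omega, by omega⟩
  · rintro ⟨i, j, m⟩ hx ⟨i', j', m'⟩ hy h
    obtain rfl : i = i' := by
      by_contra hne
      rcases Nat.lt_or_gt_of_ne hne with hlt | hlt
      · exact (hblock _ _ hx hy hlt).ne h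
      · exact (hblock _ _ hy hx hlt).ne h.symm
    obtain ⟨rfl, rfl⟩ := (hσ i hx.1).inj j m j' m' hx.2.1 hx.2.2 hy.2.1 hy.2.2
      (Nat.add_right_cancel h)
    rfl
  · rintro a ⟨ha1, ha⟩
    obtain ⟨k, hk, c, hc, hac⟩ :=
      exists_eq_sum_range_add (fun k => (μ k).sum) (show a - 1 < shift μ n by omega)
    obtain ⟨j, m, hj, hm, hjm⟩ := (hσ k hk).exists_box (c + 1) (by omega) hc
    refine ⟨(k, j, m), ⟨hk, hj, hm⟩, ?_⟩
    rw [stackedValue]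
    dsimp only
    rw [hjm, shift]
    omega

theorem prevBlock_spec {i j : ℕ} (h : 0 < ∑ k ∈ Finset.range i, (μ k).getD j 0) :
    prevBlock μ i j < i ∧ 0 < (μ (prevBlock μ i j)).getD j 0 ∧
      ∀ i', prevBlock μ i j < i' → i' < i → (μ i').getD j 0 = 0 := by
  obtain ⟨i₀, hi₀, hpos⟩ := Finset.exists_lt_of_sum_lt (h.trans_eq' Finset.sum_const_zero.symm)
  rw [Finset.mem_range] at hi₀
  refine ⟨(Nat.findGreatest_le _).trans_lt (by omega),
    Nat.findGreatest_spec (P := fun i' => 0 < (μ i').getD j 0) (show i₀ ≤ i - 1 by omega) hpos, fun i' hlt hi' => ?_⟩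
  by_contra hne
  exact (Nat.le_findGreatest (P := fun i' => 0 < (μ i').getD j 0) (show i' ≤ i - 1 by omega)
    (Nat.pos_of_ne_zero hne)).not_gt hlt

theorem sum_range_eq_prevBlock {i j : ℕ} (h : 0 < ∑ k ∈ Finset.range i, (μ k).getD j 0) :
    ∑ k ∈ Finset.range i, (μ k).getD j 0 =
      ∑ k ∈ Finset.range (prevBlock μ i j), (μ k).getD j 0 + (μ (prevBlock μ i j)).getD j 0 := by
  obtain ⟨hlt, -, hgap⟩ := prevBlock_spec h
  rw [← Finset.sum_range_succ, ← Finset.sum_range_add_sum_Ico _ hlt, Finset.sum_eq_zero fun k hk =>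
    hgap k (Finset.mem_Ico.1 hk).1 (Finset.mem_Ico.1 hk).2, add_zero]

theorem chainPred_row (x : ℕ × ℕ × ℕ) : (chainPred μ x).2.1 = x.2.1 := by
  obtain ⟨i, j, _ | m⟩ := x <;> rfl

theorem chainPred_mem {x : ℕ × ℕ × ℕ} (hx : InIdx n μ x) (hpos : 0 < stackedColumn μ x) :
    InIdx n μ (chainPred μ x) := by
  obtain ⟨i, j, _ | m⟩ := x
  · obtain ⟨hlt, hprev, -⟩ := prevBlock_spec (μ := μ) (i := i) (j := j) hpos
    show InIdx n μ (prevBlock μ i j, j, (μ (prevBlock μ i j)).getD j 0 - 1)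
    refine ⟨hlt.trans hx.1, ?_, by dsimp only; omega⟩
    by_contra hj
    rw [List.getD_eq_default _ _ (not_lt.1 hj)] at hprev
    exact lt_irrefl 0 hprev
  · have hm : m + 1 < (μ i).getD j 0 := hx.2.2
    exact ⟨hx.1, hx.2.1, by dsimp only [chainPred]; omega⟩

theorem stackedColumn_chainPred {x : ℕ × ℕ × ℕ} (hpos : 0 < stackedColumn μ x) :
    stackedColumn μ (chainPred μ x) + 1 = stackedColumn μ x := by
  obtain ⟨i, j, _ | m⟩ := x
  · have hsum := sum_range_eq_prevBlock (μ := μ) (i := i) (j := j) hpos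
    have hprev := (prevBlock_spec (μ := μ) (i := i) (j := j) hpos).2.1
    simp only [stackedColumn, chainPred] at hsum ⊢
    omega
  · rfl

theorem stackedValue_chainPred_lt (hσ : ∀ k < n, IsStdTableau (μ k) (σ k))
    {x : ℕ × ℕ × ℕ} (hx : InIdx n μ x) (hpos : 0 < stackedColumn μ x) :
    stackedValue μ σ (chainPred μ x) < stackedValue μ σ x := by
  obtain ⟨i, j, _ | m⟩ := x
  · obtain ⟨hlt, -, -⟩ := prevBlock_spec (μ := μ) (i := i) (j := j) hpos
    have hprev := stackedValue_bounds hσ (chainPred_mem hx hpos)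
    have hx' := stackedValue_bounds hσ hx
    have := shift_mono μ (show prevBlock μ i j + 1 ≤ i by omega)
    simp only [chainPred] at hprev ⊢
    dsimp only at hx'
    omega
  · exact Nat.add_lt_add_right ((hσ i hx.1).row_lt j m (m + 1) hx.2.1 m.lt_succ_self hx.2.2) _

theorem injOn_stackBox : Set.InjOn (stackBox μ) {x | InIdx n μ x} := by
  rintro ⟨i, j, m⟩ hx ⟨i', j', m'⟩ hy h
  simp only [stackBox, stackedColumn, Prod.mk.injEq] at h
  obtain ⟨rfl, h⟩ := h
  obtain ⟨rfl, rfl⟩ := eq_of_sum_range_add_eq (fun k => (μ k).getD j 0) hx.2.2 hy.2.2 h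
  rfl

section LinearMaps

variable {𝕜 V : Type*} [Field 𝕜] [AddCommGroup V] [Module 𝕜 V]
  {v : ℕ × ℕ × ℕ → V} {e0 e1 : V →ₗ[𝕜] V}

theorem IsRep.apply_eq_zero (hrep : IsRep n μ v e0 e1) {x : ℕ × ℕ × ℕ} (hx : InIdx n μ x)
    (h0 : stackedColumn μ x = 0) : (e0 + e1) (v x) = 0 := by
  obtain ⟨i, j, m⟩ := x
  simp only [stackedColumn, Nat.add_eq_zero_iff, Finset.sum_eq_zero_iff, Finset.mem_range] at h0
  obtain ⟨hgap, rfl⟩ := h0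
  rw [LinearMap.add_apply, hrep.e0_bot i j hx, hrep.e1_none i j hx hgap, add_zero]

theorem IsRep.apply_eq_chainPred (hrep : IsRep n μ v e0 e1) {x : ℕ × ℕ × ℕ}
    (hx : InIdx n μ x) (hpos : 0 < stackedColumn μ x) : (e0 + e1) (v x) = v (chainPred μ x) := by
  obtain ⟨i, j, _ | m⟩ := x
  · obtain ⟨hlt, hprev, hgap⟩ := prevBlock_spec (μ := μ) (i := i) (j := j) hpos
    rw [LinearMap.add_apply, hrep.e0_bot i j hx, hrep.e1_link i _ j hx hlt hprev hgap, zero_add]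
    rfl
  · rw [LinearMap.add_apply, hrep.e0_succ i j m hx, hrep.e1_pos i j m hx, add_zero]
    rfl

theorem IsRep.isJordanChains (hrep : IsRep n μ v e0 e1) :
    IsJordanChains (e0 + e1) v {x | InIdx n μ x} (stackedColumn μ) (chainPred μ) where
  apply_eq_zero _ hx := hrep.apply_eq_zero hx
  apply_eq _ hx := hrep.apply_eq_chainPred hx
  mapsTo _ hx := chainPred_mem hx
  depth_step _ _ := stackedColumn_chainPred
  injOn x hx y hy h := injOn_stackBox hx.1 hy.1 <| by
    have hcol := congrArg (stackedColumn μ) h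
    have hrow := congrArg (fun z => z.2.1) h
    rw [chainPred_row, chainPred_row] at hrow
    have := stackedColumn_chainPred hx.2
    have := stackedColumn_chainPred hy.2
    exact Prod.ext hrow (by dsimp only [stackBox]; omega)

end LinearMaps

theorem length_le_maxLen {k : ℕ} (hk : k < n) : (μ k).length ≤ maxLen n μ :=
  Finset.le_sup (f := fun k => (μ k).length) (Finset.mem_range.2 hk)

theorem sumShape_getD {r : ℕ} (hr : r < maxLen n μ) :
    (sumShape n μ).getD r 0 = ∑ k ∈ Finset.range n, (μ k).getD r 0 := by
  rw [List.getD_eq_getElem _ _ (by rwa [sumShape, List.length_ofFn])]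
  simp [sumShape]

theorem mapsTo_stackBox :
    Set.MapsTo (stackBox μ) {x | InIdx n μ x} (youngBoxes (sumShape n μ)) := by
  rintro ⟨i, j, m⟩ hx
  obtain ⟨hi, hj, hm⟩ : i < n ∧ j < (μ i).length ∧ m < (μ i).getD j 0 := hx
  have hjmax : j < maxLen n μ := hj.trans_le (length_le_maxLen hi)
  refine ⟨by rwa [sumShape, List.length_ofFn], ?_⟩
  have := Finset.sum_le_sum_of_subset (f := fun k => (μ k).getD j 0)
    (Finset.range_subset_range.2 (show i + 1 ≤ n from hi))
  rw [Finset.sum_range_succ] at this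
  simp only [stackBox, stackedColumn, sumShape_getD hjmax] at hm ⊢
  omega

theorem surjOn_stackBox :
    Set.SurjOn (stackBox μ) {x | InIdx n μ x} (youngBoxes (sumShape n μ)) := by
  rintro ⟨r, c⟩ ⟨hr, hc⟩
  rw [sumShape, List.length_ofFn] at hr
  rw [sumShape_getD hr] at hc
  obtain ⟨k, hk, m, hm, rfl⟩ := exists_eq_sum_range_add (fun k => (μ k).getD r 0) hc
  refine ⟨(k, r, m), ⟨hk, ?_, hm⟩, rfl⟩
  by_contra hlen
  rw [List.getD_eq_default _ _ (not_lt.1 hlen)] at hm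
  exact Nat.not_lt_zero m hm

theorem length_stkRow_prefix (q r : ℕ) :
    (((List.range q).map fun k =>
      (List.range ((μ k).getD r 0)).map fun c => σ k r c + shift μ k).flatten).length =
    ∑ k ∈ Finset.range q, (μ k).getD r 0 := by
  simp [List.length_flatten, Finset.sum, Finset.range_val, Multiset.range, Function.comp_def]

theorem stkEntry_stackBox {x : ℕ × ℕ × ℕ} (hx : InIdx n μ x) :
    stkEntry n μ σ (stackBox μ x).1 (stackBox μ x).2 = stackedValue μ σ x := by
  obtain ⟨k, r, m⟩ := x
  obtain ⟨hk, -, hm⟩ : k < n ∧ r < (μ k).length ∧ m < (μ k).getD r 0 := hx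
  obtain ⟨q, rfl⟩ : ∃ q, n = k + 1 + q := ⟨n - (k + 1), by omega⟩
  simp only [stkEntry, stkRow, stackBox, stackedColumn, stackedValue]
  rw [List.range_add, List.map_append, List.flatten_append, List.getD_append _ _ _ _ (by
    rw [length_stkRow_prefix, Finset.sum_range_succ]; omega), List.range_succ, List.map_append,
    List.flatten_append, List.getD_append_right _ _ _ _ (by rw [length_stkRow_prefix]; omega),
    length_stkRow_prefix, Nat.add_sub_cancel_left]
  simp only [List.map_cons, List.map_nil, List.flatten_cons, List.flatten_nil, List.append_nil]
  rw [List.getD_eq_getElem _ _ (by simpa using hm)]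
  simp

theorem le_LSidx {lam : ℕ → ℕ} {i k : ℕ} (hk : k ≤ n) (h : pSum lam k < i) :
    k ≤ LSidx n lam i :=
  Nat.le_findGreatest hk h

theorem pSum_LSidx_lt {lam : ℕ → ℕ} {i : ℕ} (h : LSidx n lam i ≠ 0) :
    pSum lam (LSidx n lam i) < i :=
  Nat.findGreatest_of_ne_zero (P := fun j => pSum lam j < i) rfl h

theorem LSflag_index_eq (hσ : ∀ k < n, IsStdTableau (μ k) (σ k)) (i : ℕ) :
    (⋃ k ∈ Finset.range (LSidx n (fun k => (μ k).sum) i), blockIdx n μ k) ∪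
      {x ∈ blockIdx n μ (LSidx n (fun k => (μ k).sum) i) |
        σ (LSidx n (fun k => (μ k).sum) i) x.2.1 x.2.2 ≤
          i - pSum (fun k => (μ k).sum) (LSidx n (fun k => (μ k).sum) i)} =
      {x ∈ {x | InIdx n μ x} | stackedValue μ σ x ≤ i} := by
  have hlt : LSidx n (fun k => (μ k).sum) i ≠ 0 → shift μ (LSidx n (fun k => (μ k).sum) i) < i :=
    pSum_LSidx_lt
  have hge : ∀ k ≤ n, shift μ k < i → k ≤ LSidx n (fun k => (μ k).sum) i := fun _ => le_LSidx
  change _ ∪ {x ∈ _ | _ ≤ i - shift μ _} = _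
  generalize LSidx n (fun k => (μ k).sum) i = J at hlt hge ⊢
  ext ⟨k, j, m⟩
  simp only [Set.mem_union, Set.mem_iUnion, Finset.mem_range, Set.mem_ofPred_eq, blockIdx,
    exists_prop]
  constructor
  · rintro (⟨k, hk, rfl, hx⟩ | ⟨⟨rfl, hx⟩, hσx⟩)
    · have := (stackedValue_bounds hσ hx).2
      have := shift_mono μ (show k + 1 ≤ J by omega)
      exact ⟨hx, by dsimp only at *; omega⟩
    · have := (stackedValue_bounds hσ hx).1
      exact ⟨hx, by simp only [stackedValue] at this ⊢; omega⟩
  · rintro ⟨hx, hle⟩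
    have hlo := (stackedValue_bounds hσ hx).1
    have hkJ : k ≤ J := hge k hx.1.le (by dsimp only at hlo; omega)
    obtain hkJ | rfl := hkJ.lt_or_eq
    · exact Or.inl ⟨k, hkJ, rfl, hx⟩
    · simp only [stackedValue] at hle
      exact Or.inr ⟨⟨rfl, hx⟩, by omega⟩

theorem LSflag_eq_span {𝕜 V : Type*} [Field 𝕜] [AddCommGroup V] [Module 𝕜 V]
    {v : ℕ × ℕ × ℕ → V} (hσ : ∀ k < n, IsStdTableau (μ k) (σ k))
    {Vsub : ℕ → Submodule 𝕜 V} {F : ℕ → ℕ → Submodule 𝕜 V}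
    (hVsub : ∀ k, Vsub k = span 𝕜 (v '' blockIdx n μ k))
    (hF : ∀ k d, F k d = span 𝕜 (v '' {x ∈ blockIdx n μ k | σ k x.2.1 x.2.2 ≤ d})) (i : ℕ) :
    LSflag n (fun k => (μ k).sum) Vsub F i =
      span 𝕜 (v '' {x ∈ {x | InIdx n μ x} | stackedValue μ σ x ≤ i}) := by
  rw [LSflag, Finset.sum_congr rfl fun k _ => hVsub k, hF, sum_span_eq_span_biUnion, Submodule.add_eq_sup,
    ← span_union, ← Set.image_iUnion₂, ← Set.image_union, LSflag_index_eq hσ i]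

end Representative

theorem representative_LSflag_spaltenstein_invariant_general
    {𝕜 V : Type*} [Field 𝕜] [AddCommGroup V] [Module 𝕜 V]
    (n : ℕ) (μ : ℕ → List ℕ)
    (v : ℕ × ℕ × ℕ → V) (e0 e1 : V →ₗ[𝕜] V) (hrep : IsRep n μ v e0 e1)
    (σ : ℕ → ℕ → ℕ → ℕ) (hσ : ∀ k < n, IsStdTableau (μ k) (σ k))
    (Vsub : ℕ → Submodule 𝕜 V)
    (hVsub : ∀ k, Vsub k = Submodule.span 𝕜 (v '' {x | x.1 = k ∧ InIdx n μ x}))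
    (F : ℕ → ℕ → Submodule 𝕜 V)
    (hFdef : ∀ k d, F k d = Submodule.span 𝕜
      (v '' {x | x.1 = k ∧ InIdx n μ x ∧ σ k x.2.1 x.2.2 ≤ d})) :
    (∀ k < n, IsFlagOf (Vsub k) ((μ k).sum) (F k)) ∧
    (∀ k < n, ∀ d, Submodule.map e0 (F k (d + 1)) ≤ F k d) ∧
    (∀ k < n, ∀ p : ℕ, Module.finrank 𝕜 ↥(Vsub k ⊓ LinearMap.ker (e0 ^ p)) =
      ∑ j ∈ Finset.range (μ k).length, min p ((μ k).getD j 0)) ∧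
    (∀ k < n, ∀ d ≤ (μ k).sum, ∀ p : ℕ,
      Module.finrank 𝕜 ↥(F k d ⊓ LinearMap.ker (e0 ^ p)) =
        entriesInCols (μ k) (σ k) d p) ∧
    IsFullFlag (∑ k ∈ Finset.range n, (μ k).sum)
      (LSflag n (fun k => (μ k).sum) Vsub F) ∧
    (∀ i, Submodule.map (e0 + e1) (LSflag n (fun k => (μ k).sum) Vsub F (i + 1)) ≤
      LSflag n (fun k => (μ k).sum) Vsub F i) ∧
    (∀ i ≤ ∑ k ∈ Finset.range n, (μ k).sum, ∀ p : ℕ,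
      Module.finrank 𝕜
        ↥(LSflag n (fun k => (μ k).sum) Vsub F i ⊓ LinearMap.ker ((e0 + e1) ^ p)) =
      entriesInCols (sumShape n μ) (stkEntry n μ σ) i p) := by
  have hv : LinearIndepOn 𝕜 v {x | InIdx n μ x} := hrep.indep
  have hvk (k : ℕ) : LinearIndepOn 𝕜 v (blockIdx n μ k) := hv.mono fun _ hx => hx.2
  have hV (k : ℕ) : Vsub k = span 𝕜 (v '' blockIdx n μ k) := hVsub k
  have hF (k : ℕ) : F k = fun d => span 𝕜 (v '' {x ∈ blockIdx n μ k | σ k x.2.1 x.2.2 ≤ d}) :=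
    funext fun d => (hFdef k d).trans <| by simp only [blockIdx, Set.sep_ofPred, and_assoc]
  have hLS : LSflag n (fun k => (μ k).sum) Vsub F =
      fun i => span 𝕜 (v '' {x ∈ {x | InIdx n μ x} | stackedValue μ σ x ≤ i}) :=
    funext <| LSflag_eq_span hσ hV fun k d => congrFun (hF k) d
  have he0 := hrep.isJordanChains_e0
  have he := hrep.isJordanChains
  refine ⟨fun k hk => ?_, fun k hk d => ?_, fun k hk p => ?_, fun k hk d _ p => ?_, ?_,
    fun i => ?_, fun i _ p => ?_⟩
  · rw [hV k, hF k]
    exact isFlagOf_span_sublevel (hvk k) (bijOn_blockIdx hk (hσ k hk))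
  · rw [hF k]
    exact (he0 k).map_span_sublevel_succ_le (row_lt_of_mem_blockIdx (hσ k hk)) d
  · rw [hV k, (he0 k).finrank_span_inf_ker_pow (hvk k)]
    exact ncard_blockIdx_col_lt hk p
  · rw [hF k, ((he0 k).sublevel (row_lt_of_mem_blockIdx (hσ k hk)) d).finrank_span_inf_ker_pow
      ((hvk k).mono (Set.sep_subset _ _))]
    exact (entriesInCols_eq_ncard (mapsTo_snd_blockIdx k) (surjOn_snd_blockIdx hk)
      (fun _ _ => rfl) (bijOn_blockIdx hk (hσ k hk)) d p).symm
  · rw [hLS]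
    exact (hrep.spans ▸ isFlagOf_span_sublevel hv (bijOn_stackedValue hσ)).isFullFlag
  · rw [hLS]
    exact he.map_span_sublevel_succ_le (fun x hx => stackedValue_chainPred_lt hσ hx) i
  · rw [hLS, (he.sublevel (fun x hx => stackedValue_chainPred_lt hσ hx) i).finrank_span_inf_ker_pow
      (hv.mono (Set.sep_subset _ _))]
    exact (entriesInCols_eq_ncard mapsTo_stackBox surjOn_stackBox
      (fun _ hx => stkEntry_stackBox hx) (bijOn_stackedValue hσ) i p).symm

/-- For the explicit representative `e = e0 + e1`, and standard tableaux
`σ k ∈ Std(μ k)`, define flags `F k d = span{v (k,l,m) : σ k (l,m) ≤ d}` of the subspaces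
`V_k = span{v (k,l,m)}`. Then (i) each `F k` is a full flag of `V_k` lying in the Springer
fibre of `e0` with Spaltenstein invariant `σ k` (w.r.t. `e0|_{V_k}`, which has Jordan type
`μ k`); and (ii) the Lusztig–Spaltenstein flag `LS(F 0, ..., F (n-1))` is a full flag of `V`
lying in the Springer fibre of `e` with Spaltenstein invariant `stk(σ 0, ..., σ (n-1))`. -/
theorem representative_LSflag_spaltenstein_invariant
    {𝕜 V : Type*} [Field 𝕜] [AddCommGroup V] [Module 𝕜 V]
    (n : ℕ) (μ : ℕ → List ℕ)
    (hpart : ∀ i < n, IsPartitionL (μ i)) (hcomp : ∀ i < n, 0 < (μ i).sum)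
    (v : ℕ × ℕ × ℕ → V) (e0 e1 : V →ₗ[𝕜] V) (hrep : IsRep n μ v e0 e1)
    (σ : ℕ → ℕ → ℕ → ℕ) (hσ : ∀ k < n, IsStdTableau (μ k) (σ k))
    (Vsub : ℕ → Submodule 𝕜 V)
    (hVsub : ∀ k, Vsub k = Submodule.span 𝕜 (v '' {x | x.1 = k ∧ InIdx n μ x}))
    (F : ℕ → ℕ → Submodule 𝕜 V)
    (hFdef : ∀ k d, F k d = Submodule.span 𝕜
      (v '' {x | x.1 = k ∧ InIdx n μ x ∧ σ k x.2.1 x.2.2 ≤ d})) :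
    (∀ k < n, IsFlagOf (Vsub k) ((μ k).sum) (F k)) ∧
    (∀ k < n, ∀ d, Submodule.map e0 (F k (d + 1)) ≤ F k d) ∧
    (∀ k < n, ∀ p : ℕ, Module.finrank 𝕜 ↥(Vsub k ⊓ LinearMap.ker (e0 ^ p)) =
      ∑ j ∈ Finset.range (μ k).length, min p ((μ k).getD j 0)) ∧
    (∀ k < n, ∀ d ≤ (μ k).sum, ∀ p : ℕ,
      Module.finrank 𝕜 ↥(F k d ⊓ LinearMap.ker (e0 ^ p)) =
        entriesInCols (μ k) (σ k) d p) ∧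
    IsFullFlag (∑ k ∈ Finset.range n, (μ k).sum)
      (LSflag n (fun k => (μ k).sum) Vsub F) ∧
    (∀ i, Submodule.map (e0 + e1) (LSflag n (fun k => (μ k).sum) Vsub F (i + 1)) ≤
      LSflag n (fun k => (μ k).sum) Vsub F i) ∧
    (∀ i ≤ ∑ k ∈ Finset.range n, (μ k).sum, ∀ p : ℕ,
      Module.finrank 𝕜
        ↥(LSflag n (fun k => (μ k).sum) Vsub F i ⊓ LinearMap.ker ((e0 + e1) ^ p)) =
      entriesInCols (sumShape n μ) (stkEntry n μ σ) i p) :=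
  representative_LSflag_spaltenstein_invariant_general n μ v e0 e1 hrep σ hσ Vsub hVsub F hFdef
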